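/- Let w be a finite set of bimodal formulas. There exists a finite set w₁ of formulas with w₁ ∈ CCS(□ₐ⁻⁴(w) ∪ □_b⁻⁴(w₁)) if and only if there exists an infinite sequence (w̃ᵢ)_{i≥0} of finite sets with w̃ᵢ ∈ CCS(□ₐ⁻⁴(w) ∪ □_b⁻⁴(w̃_{i+1})) for all i ≥ 0 (an ∞-window for w with transitive unboxings). -/

import Mathlib

/-- Bimodal formulas over a countable set of atoms. -/
inductive Fm : Type
  | atom : ℕ → Fm
  | bot  : Fm
  | neg  : Fm → Fm
  | conj : Fm → Fm → Fm
  | boxa : Fm → Fm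
  | boxb : Fm → Fm
deriving DecidableEq

open Fm

/-- Modal degree (maximal nesting depth of the modal operators). -/
def deg : Fm → ℕ
  | .atom _ => 0
  | .bot => 0
  | .neg φ => deg φ
  | .conj φ ψ => max (deg φ) (deg ψ)
  | .boxa φ => deg φ + 1
  | .boxb φ => deg φ + 1

/-- Degree of a finite set of formulas (0 for the empty set). -/
def degS (w : Finset Fm) : ℕ := w.sup deg

/-- `CSF w`: least set of formulas containing `w` and closed under the
classical saturation rules. -/
inductive CSF (w : Finset Fm) : Fm → Prop
  | base {φ} : φ ∈ w → CSF w φ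
  | andl {φ ψ} : CSF w (conj φ ψ) → CSF w φ
  | andr {φ ψ} : CSF w (conj φ ψ) → CSF w ψ
  | nandl {φ ψ} : CSF w (neg (conj φ ψ)) → CSF w (neg φ)
  | nandr {φ ψ} : CSF w (neg (conj φ ψ)) → CSF w (neg ψ)
  | negE {φ} : CSF w (neg φ) → CSF w φ

/-- `CCS u`: the set of consistent classical saturations of `u`. -/
def CCS (u : Finset Fm) : Set (Finset Fm) :=
  { w | u ⊆ w ∧ (∀ φ ∈ w, CSF u φ) ∧
    (∀ φ ψ : Fm, conj φ ψ ∈ w → φ ∈ w ∧ ψ ∈ w) ∧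
    (∀ φ ψ : Fm, neg (conj φ ψ) ∈ w → neg φ ∈ w ∨ neg ψ ∈ w) ∧
    (∀ φ : Fm, neg (neg φ) ∈ w → φ ∈ w) ∧
    bot ∉ w ∧
    (∀ φ : Fm, neg φ ∈ w → φ ∉ w) }

/-- Plain unboxing `□ₐ⁻(w) = {φ : □ₐφ ∈ w}`. -/
def unboxa (w : Finset Fm) : Finset Fm :=
  w.biUnion (fun φ => match φ with | .boxa ψ => {ψ} | _ => ∅)

/-- Plain unboxing `□_b⁻(w) = {φ : □_bφ ∈ w}`. -/
def unboxb (w : Finset Fm) : Finset Fm :=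
  w.biUnion (fun φ => match φ with | .boxb ψ => {ψ} | _ => ∅)

/-- Transitive unboxing `□ₐ⁻⁴(w) = {φ, □ₐφ : □ₐφ ∈ w}`. -/
def unboxa4 (w : Finset Fm) : Finset Fm :=
  w.biUnion (fun φ => match φ with | .boxa ψ => {ψ, .boxa ψ} | _ => ∅)

/-- Transitive unboxing `□_b⁻⁴(w) = {φ, □_bφ : □_bφ ∈ w}`. -/
def unboxb4 (w : Finset Fm) : Finset Fm :=
  w.biUnion (fun φ => match φ with | .boxb ψ => {ψ, .boxb ψ} | _ => ∅)

/-- Standard Kripke satisfaction in a bimodal model `(W, Ra, Rb, V)`. -/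
def Sat {W : Type} (Ra Rb : W → W → Prop) (V : ℕ → W → Prop) : W → Fm → Prop
  | x, .atom p => V p x
  | _, .bot => False
  | x, .neg φ => ¬ Sat Ra Rb V x φ
  | x, .conj φ ψ => Sat Ra Rb V x φ ∧ Sat Ra Rb V x ψ
  | x, .boxa φ => ∀ y, Ra x y → Sat Ra Rb V y φ
  | x, .boxb φ => ∀ y, Rb x y → Sat Ra Rb V y φ

/-- `(ws 0, …, ws k)` is a `k`-window for `w`. -/
def IsWindow (w : Finset Fm) (k : ℕ) (ws : ℕ → Finset Fm) : Prop :=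
  ws k ∈ CCS (unboxa w) ∧ ∀ i < k, ws i ∈ CCS (unboxa w ∪ unboxb (ws (i + 1)))

def isBoxb : Fm → Bool
  | .boxb _ => true
  | _ => false

lemma mem_unboxb4 {s : Finset Fm} {φ : Fm} :
    φ ∈ unboxb4 s ↔ ∃ ψ, Fm.boxb ψ ∈ s ∧ (φ = ψ ∨ φ = Fm.boxb ψ) := by
  simp only [unboxb4, Finset.mem_biUnion]
  constructor
  · rintro ⟨χ, hχ, hφ⟩
    cases χ with
    | boxb ψ =>
        simp only [Finset.mem_insert, Finset.mem_singleton] at hφ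
        exact ⟨ψ, hχ, hφ⟩
    | atom n => simp at hφ
    | bot => simp at hφ
    | neg _ => simp at hφ
    | conj _ _ => simp at hφ
    | boxa _ => simp at hφ
  · rintro ⟨ψ, hψ, h⟩
    exact ⟨Fm.boxb ψ, hψ, by simp [h]⟩

lemma antitone_aux (f : ℕ → ℕ) (h : ∀ n, f (n + 1) ≤ f n) : ∃ N, f (N + 1) = f N := by
  by_contra hc
  push_neg at hc
  have hs : ∀ n, f (n + 1) < f n := fun n => lt_of_le_of_ne (h n) (hc n)
  have key : ∀ n, f n + n ≤ f 0 := by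
    intro n
    induction n with
    | zero => simp
    | succ k ih =>
        have := hs k
        omega
  have := key (f 0 + 1)
  omega

/-- there is a finite set `w₁` with
`w₁ ∈ CCS(□ₐ⁻⁴(w) ∪ □_b⁻⁴(w₁))` iff there is an ∞-window for `w` with
transitive unboxings. -/
theorem stmt12 (w : Finset Fm) :
    (∃ w₁ : Finset Fm, w₁ ∈ CCS (unboxa4 w ∪ unboxb4 w₁)) ↔
    (∃ tw : ℕ → Finset Fm,
      ∀ i, tw i ∈ CCS (unboxa4 w ∪ unboxb4 (tw (i + 1)))) := by
  constructor
  · rintro ⟨w₁, hw₁⟩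
    exact ⟨fun _ => w₁, fun _ => hw₁⟩
  · rintro ⟨tw, htw⟩
    set S : ℕ → Finset Fm := fun i => (tw i).filter (fun φ => isBoxb φ) with hS
    have hsub : ∀ i, S (i + 1) ⊆ S i := by
      intro i φ hφ
      simp only [hS, Finset.mem_filter] at hφ ⊢
      refine ⟨?_, hφ.2⟩
      obtain ⟨hmem, hb⟩ := hφ
      cases φ with
      | boxb ψ =>
          have : Fm.boxb ψ ∈ unboxb4 (tw (i + 1)) :=
            mem_unboxb4.mpr ⟨ψ, hmem, Or.inr rfl⟩
          exact (htw i).1 (Finset.mem_union_right _ this)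
      | atom n => simp [isBoxb] at hb
      | bot => simp [isBoxb] at hb
      | neg _ => simp [isBoxb] at hb
      | conj _ _ => simp [isBoxb] at hb
      | boxa _ => simp [isBoxb] at hb
    obtain ⟨N, hN⟩ := antitone_aux (fun i => (S i).card)
      (fun n => Finset.card_le_card (hsub n))
    have hSeq : S (N + 1) = S N :=
      Finset.eq_of_subset_of_card_le (hsub N) (le_of_eq hN.symm)
    have hboxeq : ∀ ψ, Fm.boxb ψ ∈ tw (N + 1) ↔ Fm.boxb ψ ∈ tw N := by
      intro ψ
      constructor <;> intro hm
      · have : Fm.boxb ψ ∈ S (N + 1) := by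
          exact Finset.mem_filter.mpr ⟨hm, rfl⟩
        rw [hSeq] at this
        simp [hS, Finset.mem_filter] at this
        exact this.1
      · have : Fm.boxb ψ ∈ S N := by
          exact Finset.mem_filter.mpr ⟨hm, rfl⟩
        rw [← hSeq] at this
        simp [hS, Finset.mem_filter] at this
        exact this.1
    have hueq : unboxb4 (tw (N + 1)) = unboxb4 (tw N) := by
      ext φ
      simp only [mem_unboxb4]
      constructor <;> rintro ⟨ψ, hψ, h⟩
      · exact ⟨ψ, (hboxeq ψ).mp hψ, h⟩
      · exact ⟨ψ, (hboxeq ψ).mpr hψ, h⟩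
    refine ⟨tw N, ?_⟩
    have := htw N
    rwa [hueq] at this
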